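/- Let Q : ℝ^n → ℝ be given by Q(β) = (β − c)ᵀ A (β − c) + d for a positive semidefinite symmetric matrix A, c ∈ ℝ^n, d ∈ ℝ, and let P : ℝ^n → ℝ be convex. If β* minimizes F = Q + P over ℝ^n, then for every β ∈ ℝ^n, F(β) − F(β*) ≥ (β − β*)ᵀ A (β − β*). -/

import Mathlib

/-!
For a quadratic `Q y = B (y - c) (y - c) + d`, the difference `Q (x + v) - Q x` is exactly its
derivative at `x` in the direction `v` plus the gap `B v v`. Comparing `F = Q + P` at `x` and at
`x + t • v` for small `t > 0`, convexity of `P` turns minimality of `x` into the first-order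
condition that the derivative of `Q` plus the slope `P (x + v) - P x` is nonnegative; adding the
gap gives the bound.
-/

open Set Filter Topology

theorem nonneg_of_forall_mem_Ioc_nonneg_add_mul {s b : ℝ}
    (h : ∀ t ∈ Ioc (0 : ℝ) 1, 0 ≤ s + t * b) : 0 ≤ s := by
  have hlim : Tendsto (fun t : ℝ => s + t * b) (𝓝[>] 0) (𝓝 s) := by
    have hcont : Continuous fun t : ℝ => s + t * b := by fun_prop
    simpa using (hcont.tendsto 0).mono_left nhdsWithin_le_nhds
  exact ge_of_tendsto hlim (eventually_of_mem (Ioc_mem_nhdsGT one_pos) h)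

theorem ConvexOn.le_add_smul_sub {E : Type*} [AddCommGroup E] [Module ℝ E] {P : E → ℝ}
    (hP : ConvexOn ℝ univ P) (x v : E) {t : ℝ} (ht₀ : 0 ≤ t) (ht₁ : t ≤ 1) :
    P (x + t • v) ≤ P x + t * (P (x + v) - P x) := by
  have hcomb : x + t • v = (1 - t) • x + t • (x + v) := by
    rw [smul_add, sub_smul, one_smul]; abel
  have hconv := hP.2 (mem_univ x) (mem_univ (x + v)) (sub_nonneg.2 ht₁) ht₀ (sub_add_cancel 1 t)
  rw [hcomb]
  simp only [smul_eq_mul] at hconv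
  linarith

namespace LinearMap.BilinForm

variable {E : Type*} [AddCommGroup E] [Module ℝ E]

theorem apply_add_smul_self (B : LinearMap.BilinForm ℝ E) (x v : E) (t : ℝ) :
    B (x + t • v) (x + t • v) = B x x + t * (B x v + B v x) + t ^ 2 * B v v := by
  simp only [map_add, LinearMap.add_apply, map_smul, LinearMap.smul_apply, smul_eq_mul]
  ring

theorem directional_nonneg_of_forall_le (B : LinearMap.BilinForm ℝ E) {P : E → ℝ}
    (hP : ConvexOn ℝ univ P) {c x : E}
    (hmin : ∀ y, B (x - c) (x - c) + P x ≤ B (y - c) (y - c) + P y) (v : E) :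
    0 ≤ B (x - c) v + B v (x - c) + (P (x + v) - P x) := by
  refine nonneg_of_forall_mem_Ioc_nonneg_add_mul (b := B v v) fun t ⟨ht₀, ht₁⟩ => ?_
  have hconv := hP.le_add_smul_sub x v ht₀.le ht₁
  have hquad := B.apply_add_smul_self (x - c) v t
  have hle := hmin (x + t • v)
  rw [add_sub_right_comm, hquad] at hle
  have hscaled : 0 ≤ t * (B (x - c) v + B v (x - c) + (P (x + v) - P x) + t * B v v) := by
    nlinarith
  exact nonneg_of_mul_nonneg_right (by linarith) ht₀

theorem apply_sub_self_le_of_forall_le (B : LinearMap.BilinForm ℝ E) {P : E → ℝ}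
    (hP : ConvexOn ℝ univ P) {c x : E}
    (hmin : ∀ y, B (x - c) (x - c) + P x ≤ B (y - c) (y - c) + P y) (y : E) :
    B (y - x) (y - x) ≤ (B (y - c) (y - c) + P y) - (B (x - c) (x - c) + P x) := by
  have hfirst := B.directional_nonneg_of_forall_le hP hmin (y - x)
  have hquad := B.apply_add_smul_self (x - c) (y - x) 1
  rw [one_smul, sub_add_sub_cancel', one_pow, one_mul, one_mul] at hquad
  rw [add_sub_cancel] at hfirst
  linarith

end LinearMap.BilinForm

theorem stmt2_general {n : ℕ} (A : Matrix (Fin n) (Fin n) ℝ)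
    (c : Fin n → ℝ) (d : ℝ) (Q P : (Fin n → ℝ) → ℝ)
    (hQ : ∀ β, Q β = dotProduct (β - c) (A.mulVec (β - c)) + d)
    (hP : ConvexOn ℝ Set.univ P)
    (βs : Fin n → ℝ) (hmin : ∀ β, Q βs + P βs ≤ Q β + P β) :
    ∀ β : Fin n → ℝ,
      dotProduct (β - βs) (A.mulVec (β - βs)) ≤ (Q β + P β) - (Q βs + P βs) := by
  simp only [hQ, ← Matrix.toBilin'_apply'] at hmin ⊢
  intro β
  have hgap := (Matrix.toBilin' A).apply_sub_self_le_of_forall_le hP (c := c) (x := βs)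
    (fun y => by linarith [hmin y]) β
  linarith

/-- If `β*` minimizes `F = Q + P` with `Q(β) = (β-c)ᵀA(β-c) + d` (A psd symmetric)
and `P` convex, then `F(β) - F(β*) ≥ (β-β*)ᵀA(β-β*)` for all `β`. -/
theorem stmt2 {n : ℕ} (A : Matrix (Fin n) (Fin n) ℝ) (hA : A.PosSemidef)
    (c : Fin n → ℝ) (d : ℝ) (Q P : (Fin n → ℝ) → ℝ)
    (hQ : ∀ β, Q β = dotProduct (β - c) (A.mulVec (β - c)) + d)
    (hP : ConvexOn ℝ Set.univ P)
    (βs : Fin n → ℝ) (hmin : ∀ β, Q βs + P βs ≤ Q β + P β) :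
    ∀ β : Fin n → ℝ,
      dotProduct (β - βs) (A.mulVec (β - βs)) ≤ (Q β + P β) - (Q βs + P βs) :=
  stmt2_general A c d Q P hQ hP βs hmin
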